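/- arXiv:1705.05111 — 3 statements merged into one kernel-verified Lean document; each statement's English description precedes it below -/
import Mathlib

section
/- Let M be a set of morphisms which k-linearly spans T, and let (F, ω): T → T be a k-linear triangle endofunctor such that F(f) = f for every f ∈ M (in particular F fixes every object of obj(M)). Then there exist a unique natural isomorphism ω′: Σ → Σ and a unique isomorphism of triangle functors θ: (F, ω) → (Id_T, ω′) satisfying θ_S = Id_S for every object S of obj(M). -/
/-!
STATEMENT 1: Let M be a set of morphisms which k-linearly spans T, and let
(F, ω): T → T be a k-linear triangle endofunctor such that F(f) = f for every f ∈ M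
(in particular F fixes every object of obj(M)). Then there exist a unique natural
isomorphism ω′: Σ → Σ and a unique isomorphism of triangle functors
θ: (F, ω) → (Id_T, ω′) satisfying θ_S = Id_S for every object S of obj(M).
-/

open CategoryTheory Limits Pretriangulated

/-- `(F, ω)` is a triangle functor. -/
def IsTriangleFunctor {C : Type*} {D : Type*} [Category C] [Category D]
    [HasZeroObject C] [HasZeroObject D] [Preadditive C] [Preadditive D]
    [HasShift C ℤ] [HasShift D ℤ]
    [∀ n : ℤ, (shiftFunctor C n).Additive] [∀ n : ℤ, (shiftFunctor D n).Additive]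
    [Pretriangulated C] [Pretriangulated D] (F : C ⥤ D)
    (ω : shiftFunctor C (1 : ℤ) ⋙ F ≅ F ⋙ shiftFunctor D (1 : ℤ)) : Prop :=
  ∀ T, (T ∈ distTriang C) →
    (Triangle.mk (F.map T.mor₁) (F.map T.mor₂) (F.map T.mor₃ ≫ ω.hom.app T.obj₁)
      ∈ distTriang D)

section Span

variable {T : Type*} [Category T]

/-- The objects appearing as domain or codomain of a morphism in the collection `M`. -/
def objM (M : ∀ X Y : T, Set (X ⟶ Y)) : Set T :=
  {X | ∃ Y : T, (∃ f : X ⟶ Y, f ∈ M X Y) ∨ (∃ f : Y ⟶ X, f ∈ M Y X)}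

/-- Compositions of morphisms from `M`, together with the identity morphisms of the
objects of `obj(M)`. -/
inductive MComp (M : ∀ X Y : T, Set (X ⟶ Y)) : ∀ (X Y : T), (X ⟶ Y) → Prop
  | of {X Y : T} (f : X ⟶ Y) (hf : f ∈ M X Y) : MComp M X Y f
  | id (X : T) (hX : X ∈ objM M) : MComp M X X (𝟙 X)
  | comp {X Y Z : T} (f : X ⟶ Y) (g : Y ⟶ Z) :
      MComp M X Y f → MComp M Y Z g → MComp M X Z (f ≫ g)

variable (k : Type*) [Field k] [Preadditive T] [Linear k T]

/-- `M` k-linearly spans `T`: every morphism between objects of `obj(M)` is a k-linear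
combination of identity morphisms and compositions of morphisms from `M`, and every
object of `T` is isomorphic to a finite direct sum of objects of `obj(M)`. -/
def Spans (M : ∀ X Y : T, Set (X ⟶ Y)) : Prop :=
  (∀ X, X ∈ objM M → ∀ Y, Y ∈ objM M → ∀ f : X ⟶ Y,
      f ∈ Submodule.span k {g : X ⟶ Y | MComp M X Y g}) ∧
  (∀ X : T, ∃ (n : ℕ) (s : Fin n → T) (ι : ∀ i, s i ⟶ X) (π : ∀ i, X ⟶ s i),
      (∀ i, s i ∈ objM M) ∧ (∀ i, ι i ≫ π i = 𝟙 (s i)) ∧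
      (∀ i j, i ≠ j → ι i ≫ π j = 0) ∧ (∑ i, π i ≫ ι i) = 𝟙 X)

end Span


/-!
Choose for every object `X` maps `πᵢ : X ⟶ Sᵢ`, `ιᵢ : Sᵢ ⟶ X` with `Sᵢ ∈ obj(M)` and
`∑ πᵢ ≫ ιᵢ = 𝟙 X`. Since `F` is `k`-linear and fixes `M`, it fixes every morphism between objects
of `obj(M)`, so `θ_X := ∑ F(πᵢ) ≫ ιᵢ` is a natural isomorphism `F ≅ 𝟭` which is the identity on
`obj(M)`; an additive natural transformation is determined by its components on `obj(M)`, which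
gives uniqueness of `θ`. The compatibility `ω′ ∘ θΣ = Σθ ∘ ω` then forces `ω′` to be the conjugate
of `ω` by `θ`, and conjugating along a natural isomorphism preserves triangle functors.
-/

structure RetractOfSum {C : Type*} [Category C] [Preadditive C] (P : Set C) (X : C) where
  n : ℕ
  obj : Fin n → C
  ι : ∀ i, obj i ⟶ X
  π : ∀ i, X ⟶ obj i
  mem : ∀ i, obj i ∈ P
  sum_π_ι : ∑ i, π i ≫ ι i = 𝟙 X

namespace RetractOfSum

variable {C D : Type*} [Category C] [Category D] [Preadditive C] [Preadditive D] {P : Set C}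
  {F G : C ⥤ D}

lemma natTrans_ext (d : ∀ X, RetractOfSum P X) [F.Additive] {θ θ' : F ⟶ G}
    (h : ∀ S ∈ P, θ.app S = θ'.app S) : θ = θ' := by
  ext X
  have expand : ∀ η : F ⟶ G,
      η.app X = ∑ i, F.map ((d X).π i) ≫ η.app ((d X).obj i) ≫ G.map ((d X).ι i) := by
    intro η
    conv_lhs => rw [← Category.id_comp (η.app X), ← F.map_id, ← (d X).sum_π_ι, F.map_sum,
      Preadditive.sum_comp]
    simp only [F.map_comp, Category.assoc, η.naturality]
  rw [expand θ, expand θ']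
  simp only [h _ ((d X).mem _)]

variable (d : ∀ X, RetractOfSum P X) (α : ∀ S ∈ P, F.obj S ⟶ G.obj S)
  (hα : ∀ (S S' : C) (hS : S ∈ P) (hS' : S' ∈ P) (f : S ⟶ S'),
    F.map f ≫ α S' hS' = α S hS ≫ G.map f)

def extendApp (X : C) : F.obj X ⟶ G.obj X :=
  ∑ i, F.map ((d X).π i) ≫ α _ ((d X).mem i) ≫ G.map ((d X).ι i)

include hα in
lemma map_comp_extendApp [G.Additive] {S X : C} (hS : S ∈ P) (g : S ⟶ X) :
    F.map g ≫ extendApp d α X = α S hS ≫ G.map g := by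
  simp only [extendApp, Preadditive.comp_sum, ← Category.assoc, ← F.map_comp]
  simp only [hα _ _ hS ((d X).mem _), Category.assoc, ← G.map_comp, ← Preadditive.comp_sum,
    ← G.map_sum, (d X).sum_π_ι, Category.comp_id]

def extend [F.Additive] [G.Additive] : F ⟶ G where
  app := extendApp d α
  naturality X Y f := by
    have hf : F.map f = ∑ i, F.map ((d X).π i) ≫ F.map ((d X).ι i ≫ f) := by
      simp only [← F.map_comp, ← F.map_sum, ← Category.assoc, ← Preadditive.sum_comp,
        (d X).sum_π_ι, Category.id_comp]
    rw [hf, Preadditive.sum_comp]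
    simp only [Category.assoc, map_comp_extendApp d α hα ((d X).mem _)]
    simp only [G.map_comp, extendApp, Preadditive.sum_comp, Category.assoc]

lemma extend_app_of_mem [F.Additive] [G.Additive] {S : C} (hS : S ∈ P) :
    (extend d α hα).app S = α S hS := by
  simpa [extend] using map_comp_extendApp d α hα hS (𝟙 S)

def extendIso [F.Additive] [G.Additive] (α : ∀ S ∈ P, F.obj S ≅ G.obj S)
    (hα : ∀ (S S' : C) (hS : S ∈ P) (hS' : S' ∈ P) (f : S ⟶ S'),
      F.map f ≫ (α S' hS').hom = (α S hS).hom ≫ G.map f) : F ≅ G where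
  hom := extend d (fun S hS => (α S hS).hom) hα
  inv := extend d (fun S hS => (α S hS).inv) fun S S' hS hS' f => by
    rw [Iso.comp_inv_eq, Category.assoc, hα S S' hS hS', Iso.inv_hom_id_assoc]
  hom_inv_id := natTrans_ext d fun S hS => by simp [extend_app_of_mem d _ _ hS]
  inv_hom_id := natTrans_ext d fun S hS => by simp [extend_app_of_mem d _ _ hS]

end RetractOfSum

lemma Spans.nonempty_retractOfSum {k T : Type*} [Field k] [Category T] [Preadditive T]
    [Linear k T] {M : ∀ X Y : T, Set (X ⟶ Y)} (hspan : Spans k M) (X : T) :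
    Nonempty (RetractOfSum (objM M) X) := by
  obtain ⟨n, s, ι, π, hmem, -, -, hsum⟩ := hspan.2 X
  exact ⟨⟨n, s, ι, π, hmem, hsum⟩⟩

lemma MComp.mem_objM {T : Type*} [Category T] {M : ∀ X Y : T, Set (X ⟶ Y)} {X Y : T}
    {f : X ⟶ Y} (hf : MComp M X Y f) : X ∈ objM M ∧ Y ∈ objM M := by
  induction hf with
  | of f hf => exact ⟨⟨_, Or.inl ⟨f, hf⟩⟩, ⟨_, Or.inr ⟨f, hf⟩⟩⟩
  | id X hX => exact ⟨hX, hX⟩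
  | comp _ _ _ _ ihf ihg => exact ⟨ihf.1, ihg.2⟩

section FixedMorphisms

variable {T : Type*} [Category T] {M : ∀ X Y : T, Set (X ⟶ Y)} {F : T ⥤ T}
  (hobj : ∀ X, X ∈ objM M → F.obj X = X)
  (hmap : ∀ (X Y : T) (hX : X ∈ objM M) (hY : Y ∈ objM M) (f : X ⟶ Y), f ∈ M X Y →
    F.map f = eqToHom (hobj X hX) ≫ f ≫ eqToHom (hobj Y hY).symm)

include hmap

lemma MComp.map_comp_eqToHom {X Y : T} {f : X ⟶ Y} (hf : MComp M X Y f)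
    (hX : X ∈ objM M) (hY : Y ∈ objM M) :
    F.map f ≫ eqToHom (hobj Y hY) = eqToHom (hobj X hX) ≫ f := by
  induction hf with
  | of f hf => simp [hmap _ _ hX hY f hf]
  | id X hX => simp
  | comp f g hf _ ihf ihg =>
    rw [F.map_comp, Category.assoc, ihg hf.mem_objM.2 hY, reassoc_of% (ihf hX hf.mem_objM.2)]

lemma Spans.map_comp_eqToHom {k : Type*} [Field k] [Preadditive T] [Linear k T] [F.Additive]
    [F.Linear k] (hspan : Spans k M) (X Y : T)
    (hX : X ∈ objM M) (hY : Y ∈ objM M) (f : X ⟶ Y) :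
    F.map f ≫ eqToHom (hobj Y hY) = eqToHom (hobj X hX) ≫ f := by
  induction hspan.1 X hX Y hY f using Submodule.span_induction with
  | mem g hg => exact MComp.map_comp_eqToHom hobj hmap hg hX hY
  | zero => simp
  | add g g' _ _ ih ih' => simp [ih, ih']
  | smul a g _ ih => simp [ih]

end FixedMorphisms

lemma IsTriangleFunctor.of_iso {C D : Type*} [Category C] [Category D]
    [HasZeroObject C] [HasZeroObject D] [Preadditive C] [Preadditive D]
    [HasShift C ℤ] [HasShift D ℤ]
    [∀ n : ℤ, (shiftFunctor C n).Additive] [∀ n : ℤ, (shiftFunctor D n).Additive]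
    [Pretriangulated C] [Pretriangulated D] {F G : C ⥤ D}
    {ω : shiftFunctor C (1 : ℤ) ⋙ F ≅ F ⋙ shiftFunctor D (1 : ℤ)}
    {ω' : shiftFunctor C (1 : ℤ) ⋙ G ≅ G ⋙ shiftFunctor D (1 : ℤ)}
    (hF : IsTriangleFunctor F ω) (e : F ≅ G)
    (he : ∀ X : C, e.hom.app ((shiftFunctor C (1 : ℤ)).obj X) ≫ ω'.hom.app X =
      ω.hom.app X ≫ (shiftFunctor D (1 : ℤ)).map (e.hom.app X)) :
    IsTriangleFunctor G ω' := by
  intro Tr hTr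
  refine isomorphic_distinguished _ (hF Tr hTr) _ (Iso.symm ?_)
  refine Triangle.isoMk _ _ (e.app Tr.obj₁) (e.app Tr.obj₂) (e.app Tr.obj₃)
    (e.hom.naturality Tr.mor₁) (e.hom.naturality Tr.mor₂) ?_
  change (F.map Tr.mor₃ ≫ ω.hom.app Tr.obj₁) ≫ (shiftFunctor D (1 : ℤ)).map (e.hom.app Tr.obj₁) =
    e.hom.app Tr.obj₃ ≫ G.map Tr.mor₃ ≫ ω'.hom.app Tr.obj₁
  rw [Category.assoc, ← e.hom.naturality_assoc, he]

theorem stmt_1 {k : Type*} [Field k] {T : Type*} [Category T] [Preadditive T] [Linear k T]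
    [HasZeroObject T] [HasShift T ℤ] [∀ n : ℤ, (shiftFunctor T n).Additive]
    [Pretriangulated T] [HasBinaryBiproducts T]
    -- Hom-finite and Krull–Schmidt:
    (hfin : ∀ X Y : T, FiniteDimensional k (X ⟶ Y)) [IsIdempotentComplete T]
    (M : ∀ X Y : T, Set (X ⟶ Y)) (hspan : Spans k M)
    (F : T ⥤ T) [F.Additive] [F.Linear k]
    (ω : shiftFunctor T (1 : ℤ) ⋙ F ≅ F ⋙ shiftFunctor T (1 : ℤ))
    (hF : IsTriangleFunctor F ω)
    (hobj : ∀ X, X ∈ objM M → F.obj X = X)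
    (hmap : ∀ (X Y : T) (hX : X ∈ objM M) (hY : Y ∈ objM M) (f : X ⟶ Y), f ∈ M X Y →
      F.map f = eqToHom (hobj X hX) ≫ f ≫ eqToHom (hobj Y hY).symm) :
    ∃! p : (shiftFunctor T (1 : ℤ) ≅ shiftFunctor T (1 : ℤ)) × (F ≅ 𝟭 T),
      -- (Id_T, ω′) is a triangle functor
      IsTriangleFunctor (𝟭 T)
        (Functor.rightUnitor _ ≪≫ p.1 ≪≫ (Functor.leftUnitor _).symm) ∧
      -- θ : (F, ω) → (Id_T, ω′) respects the connecting isomorphisms: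
      -- ω′ ∘ θΣ = Σθ ∘ ω
      (∀ X : T, p.2.hom.app ((shiftFunctor T (1 : ℤ)).obj X) ≫ p.1.hom.app X =
        ω.hom.app X ≫ (shiftFunctor T (1 : ℤ)).map (p.2.hom.app X)) ∧
      -- θ_S = Id_S for every S in obj(M)
      (∀ S : T, ∀ hS : S ∈ objM M, p.2.hom.app S = eqToHom (hobj S hS)) := by
  let d X := (hspan.nonempty_retractOfSum X).some
  have hfix := hspan.map_comp_eqToHom hobj hmap
  let θ : F ≅ 𝟭 T := RetractOfSum.extendIso d (fun S hS => eqToIso (hobj S hS)) hfix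
  have hθ S (hS : S ∈ objM M) : θ.hom.app S = eqToHom (hobj S hS) :=
    RetractOfSum.extend_app_of_mem d _ hfix hS
  let ω' : shiftFunctor T (1 : ℤ) ≅ shiftFunctor T (1 : ℤ) :=
    (Functor.isoWhiskerLeft _ θ ≪≫ Functor.rightUnitor _).symm ≪≫ ω ≪≫
      Functor.isoWhiskerRight θ _ ≪≫ Functor.leftUnitor _
  have hω' X : θ.hom.app ((shiftFunctor T (1 : ℤ)).obj X) ≫ ω'.hom.app X =
      ω.hom.app X ≫ (shiftFunctor T (1 : ℤ)).map (θ.hom.app X) := by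
    simp [ω']
  refine ⟨⟨ω', θ⟩, ⟨hF.of_iso θ fun X => by simpa using hω' X, hω', hθ⟩, ?_⟩
  rintro ⟨ω₁, θ₁⟩ ⟨-, hω₁, hθ₁⟩
  obtain rfl : θ₁ = θ :=
    Iso.ext (RetractOfSum.natTrans_ext d fun S hS => (hθ₁ S hS).trans (hθ S hS).symm)
  obtain rfl : ω₁ = ω' := by
    ext X
    exact (cancel_epi (θ.hom.app _)).1 ((hω₁ X).trans (hω' X).symm)
  rfl
end

section
/- Let X --f--> Y --g--> Z --h--> Σ(X) be an exact triangle in T with g ≠ 0 and h ≠ 0, and assume that End_T(Z) equals k·Id_Z, or equals k·Id_Z ⊕ k·Δ where Δ is an almost-vanishing endomorphism of Z. Then for a nonzero scalar λ ∈ k, the triangle X --f--> Y --g--> Z --(λh)--> Σ(X) is exact if and only if λ = 1. -/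
/-!
Comparing the two triangles via the identities on `X` and `Y` gives an endomorphism `c` of `Z`
with `g ≫ c = g` and `h = λ • (c ≫ h)`. Since `g ≫ h = 0` with `g, h ≠ 0`, `g` is not a
retraction and `h` is not a section, so an almost-vanishing `Δ` is killed by both; hence every
endomorphism of `Z`, in particular `c`, acts on `g` and on `h` through one scalar `e`. The first
identity forces `e = 1`, and then the second reads `h = λ • h`.
-/

open CategoryTheory Limits Pretriangulated

/-- A nonzero non-invertible endomorphism `Δ : X ⟶ X` is almost-vanishing if `Δ ∘ f = 0`
for every non-retraction `f : Y ⟶ X` and `g ∘ Δ = 0` for every non-section `g : X ⟶ Z`. -/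
def AlmostVanishing {T : Type*} [Category T] [Preadditive T] {X : T} (Δ : X ⟶ X) : Prop :=
  Δ ≠ 0 ∧ ¬ IsIso Δ ∧
  (∀ (Y : T) (f : Y ⟶ X), ¬ IsSplitEpi f → f ≫ Δ = 0) ∧
  (∀ (Z : T) (g : X ⟶ Z), ¬ IsSplitMono g → Δ ≫ g = 0)

section

variable {C : Type*} [Category C] [HasZeroMorphisms C] {Y Z W : C} {g : Y ⟶ Z} {h : Z ⟶ W}

lemma not_isSplitEpi_of_comp_eq_zero (w : g ≫ h = 0) (hh : h ≠ 0) : ¬ IsSplitEpi g := fun _ =>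
  hh ((cancel_epi g).mp (by rw [w, comp_zero]))

lemma not_isSplitMono_of_comp_eq_zero (w : g ≫ h = 0) (hg : g ≠ 0) : ¬ IsSplitMono h := fun _ =>
  hg ((cancel_mono h).mp (by rw [w, zero_comp]))

end

lemma exists_comp_eq_smul_and_comp_eq_smul {k : Type*} [Semiring k] {C : Type*} [Category C]
    [Preadditive C] [Linear k C] {Y Z W : C} {g : Y ⟶ Z} {h : Z ⟶ W}
    (hEnd : (∀ u : Z ⟶ Z, ∃ c : k, u = c • 𝟙 Z) ∨
      (∃ Δ : Z ⟶ Z, AlmostVanishing Δ ∧ ∀ u : Z ⟶ Z, ∃ c d : k, u = c • 𝟙 Z + d • Δ))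
    (hg : ¬ IsSplitEpi g) (hh : ¬ IsSplitMono h) (u : Z ⟶ Z) :
    ∃ e : k, g ≫ u = e • g ∧ u ≫ h = e • h := by
  rcases hEnd with hscalar | ⟨Δ, hΔ, hspan⟩
  · obtain ⟨e, rfl⟩ := hscalar u
    exact ⟨e, by simp, by simp⟩
  · obtain ⟨e, d, rfl⟩ := hspan u
    have hgΔ : g ≫ Δ = 0 := hΔ.2.2.1 Y g hg
    have hΔh : Δ ≫ h = 0 := hΔ.2.2.2 W h hh
    exact ⟨e, by simp [hgΔ], by simp [hΔh]⟩

lemma exists_comp_eq_self_and_eq_smul_comp {k : Type*} [Semiring k] {C : Type*} [Category C]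
    [Preadditive C] [Linear k C] [HasZeroObject C] [HasShift C ℤ]
    [∀ n : ℤ, (shiftFunctor C n).Additive] [Pretriangulated C]
    {X Y Z : C} (f : X ⟶ Y) (g : Y ⟶ Z) (h : Z ⟶ X⟦(1 : ℤ)⟧) (lam : k)
    (hdist : Triangle.mk f g h ∈ distTriang C) (hdist' : Triangle.mk f g (lam • h) ∈ distTriang C) :
    ∃ c : Z ⟶ Z, g ≫ c = g ∧ h = lam • (c ≫ h) := by
  obtain ⟨c, hgc, hch⟩ : ∃ c : Z ⟶ Z, g ≫ c = 𝟙 Y ≫ g ∧ h ≫ (𝟙 X)⟦1⟧' = c ≫ (lam • h) :=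
    complete_distinguished_triangle_morphism _ _ hdist hdist' (𝟙 X) (𝟙 Y)
      ((Category.comp_id f).trans (Category.id_comp f).symm)
  rw [Category.id_comp] at hgc
  rw [CategoryTheory.Functor.map_id, Category.comp_id, Linear.comp_smul] at hch
  exact ⟨c, hgc, hch⟩

theorem stmt_3 {k : Type*} [Field k] {T : Type*} [Category T] [Preadditive T] [Linear k T]
    [HasZeroObject T] [HasShift T ℤ] [∀ n : ℤ, (shiftFunctor T n).Additive]
    [Pretriangulated T] [HasBinaryBiproducts T]
    -- Hom-finite and Krull–Schmidt:
    (hfin : ∀ X Y : T, FiniteDimensional k (X ⟶ Y)) [IsIdempotentComplete T]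
    {X Y Z : T} (f : X ⟶ Y) (g : Y ⟶ Z) (h : Z ⟶ X⟦(1 : ℤ)⟧)
    (hdist : Triangle.mk f g h ∈ distTriang T) (hg : g ≠ 0) (hh : h ≠ 0)
    (hEnd : (∀ u : Z ⟶ Z, ∃ c : k, u = c • 𝟙 Z) ∨
      (∃ Δ : Z ⟶ Z, AlmostVanishing Δ ∧ ∀ u : Z ⟶ Z, ∃ c d : k, u = c • 𝟙 Z + d • Δ))
    (lam : k) (hlam : lam ≠ 0) :
    (Triangle.mk f g (lam • h) ∈ distTriang T) ↔ lam = 1 := by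
  refine ⟨fun hdist' => ?_, by rintro rfl; simpa using hdist⟩
  have hgh : g ≫ h = 0 := comp_distTriang_mor_zero₂₃ _ hdist
  obtain ⟨c, hgc, hch⟩ := exists_comp_eq_self_and_eq_smul_comp f g h lam hdist hdist'
  obtain ⟨e, hge, hhe⟩ := exists_comp_eq_smul_and_comp_eq_smul hEnd
    (not_isSplitEpi_of_comp_eq_zero hgh hh) (not_isSplitMono_of_comp_eq_zero hgh hg) c
  have he : e = 1 := smul_left_injective k hg (by simpa [hgc] using hge.symm)
  rw [hhe, he, one_smul] at hch
  exact smul_left_injective k hh (by simpa using hch.symm)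
end

section
/- Let A be a k-linear additive category and let (F, ω) be a pseudo-identity on K^b(A). Then there exists a normalized pseudo-identity (F′, ω′) on K^b(A) together with an isomorphism of triangle functors δ: (F, ω) → (F′, ω′). -/
open CategoryTheory Limits Pretriangulated

section Kb

variable {k : Type*} [Field k]
variable (V : Type*) [Category V] [Preadditive V] [Linear k V]
  [HasZeroObject V] [HasBinaryBiproducts V]

/-- A cochain complex is bounded. -/
def IsBoundedComplex (C : CochainComplex V ℤ) : Prop :=
  ∃ a b : ℤ, ∀ n : ℤ, (n < a ∨ b < n) → IsZero (C.X n)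

/-- An object of the homotopy category `K(V)` belongs to the bounded homotopy
category `K^b(V)` if it is isomorphic to a bounded complex. -/
def InKb (X : HomotopyCategory V (ComplexShape.up ℤ)) : Prop :=
  ∃ C : CochainComplex V ℤ, IsBoundedComplex V C ∧
    Nonempty (X ≅ (HomotopyCategory.quotient V (ComplexShape.up ℤ)).obj C)

/-- The bounded homotopy category `K^b(V)`, as the full subcategory of the homotopy
category on bounded complexes. -/
def Kb := ObjectProperty.FullSubcategory (InKb V)

instance : Category (Kb V) := ObjectProperty.FullSubcategory.category _
instance : Preadditive (Kb V) := Preadditive.fullSubcategory _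
instance : Linear k (Kb V) := Linear.fullSubcategory _

/-- The suspension functor `Σ` of `K^b(V)`, induced by the shift of the homotopy
category. -/
noncomputable def SuspKb : Kb V ⥤ Kb V where
  obj X := ⟨X.obj⟦(1 : ℤ)⟧, by
    obtain ⟨C, ⟨a, b, hC⟩, ⟨e⟩⟩ := X.2
    refine ⟨C⟦(1 : ℤ)⟧, ⟨a - 1, b - 1, fun n hn => ?_⟩, ⟨((shiftFunctor _ (1 : ℤ)).mapIso e) ≪≫
      (((HomotopyCategory.quotient V (ComplexShape.up ℤ)).commShiftIso (1 : ℤ)).app C).symm⟩⟩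
    exact hC (n + 1) (by omega)⟩
  map f := ObjectProperty.homMk ((shiftFunctor (HomotopyCategory V (ComplexShape.up ℤ)) (1 : ℤ)).map f.hom)
  map_id X := ObjectProperty.hom_ext _ ((shiftFunctor (HomotopyCategory V (ComplexShape.up ℤ)) (1 : ℤ)).map_id X.obj)
  map_comp f g := ObjectProperty.hom_ext _ ((shiftFunctor (HomotopyCategory V (ComplexShape.up ℤ)) (1 : ℤ)).map_comp f.hom g.hom)

/-- A triangle in `K^b(V)` is exact if it is a distinguished triangle of the ambient
homotopy category. -/
def ExactKb {X Y Z : Kb V} (f : X ⟶ Y) (g : Y ⟶ Z) (h : Z ⟶ (SuspKb V).obj X) : Prop :=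
  (Triangle.mk (show X.obj ⟶ Y.obj from f.hom) (show Y.obj ⟶ Z.obj from g.hom)
    (show Z.obj ⟶ X.obj⟦(1 : ℤ)⟧ from h.hom)) ∈
    distTriang (HomotopyCategory V (ComplexShape.up ℤ))

/-- The object of `K^b(V)` is a stalk complex concentrated in degree `-n`,
i.e. belongs to `Σⁿ(V)`. -/
def IsStalkKb (n : ℤ) (X : Kb V) : Prop :=
  ∀ m : ℤ, m ≠ -n → IsZero ((X.obj.as).X m)

variable (k) in
/-- A pseudo-identity on `K^b(V)`: a k-linear triangle endofunctor `(F, ω)` such that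
`F(X) = X` for every complex `X` and the restriction of `F` to each `Σⁿ(V)` is the
identity functor. -/
structure IsPseudoIdentity (F : Kb V ⥤ Kb V)
    (ω : SuspKb V ⋙ F ≅ F ⋙ SuspKb V) : Prop where
  additive : F.Additive
  linear : F.Linear k
  obj_eq : ∀ X : Kb V, F.obj X = X
  map_stalk : ∀ (n : ℤ) (X Y : Kb V), IsStalkKb V n X → IsStalkKb V n Y →
    ∀ f : X ⟶ Y, F.map f = eqToHom (obj_eq X) ≫ f ≫ eqToHom (obj_eq Y).symm
  exact : ∀ (X Y Z : Kb V) (f : X ⟶ Y) (g : Y ⟶ Z) (h : Z ⟶ (SuspKb V).obj X),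
    ExactKb V f g h → ExactKb V (F.map f) (F.map g) (F.map h ≫ ω.hom.app X)

/-- A pseudo-identity `(F, ω)` is normalized if `ω_X` is the identity for every stalk
complex `X`. -/
def IsNormalizedPseudoIdentity (F : Kb V ⥤ Kb V)
    (ω : SuspKb V ⋙ F ≅ F ⋙ SuspKb V) : Prop :=
  ∀ (n : ℤ) (X : Kb V), IsStalkKb V n X →
    ∃ e : F.obj ((SuspKb V).obj X) = (SuspKb V).obj (F.obj X), ω.hom.app X = eqToHom e

end Kb

/-!
For a stalk complex `X`, the component `ω_X`, read through `F = id` on objects, is an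
automorphism `θ_X` of `ΣX`, natural on each `Σⁿ(A)` because `F` is the identity there.
Normalizing `(F, ω)` amounts to finding automorphisms `d_X`, natural on each `Σⁿ(A)`, with
`d_{ΣX} = θ_X ∘ Σ d_X`; conjugating `F` by `d` then turns `ω_X` into the identity. Such a `d`
is built degree by degree from `d = 1` on `Σ⁰(A)`: upwards because every complex in
`Σⁿ⁺¹(A)` is `Σ` of one in `Σⁿ(A)`, downwards because `Σ` is fully faithful. Conjugation by
`d` is an isomorphism of triangle functors, so it preserves exact triangles and, since `d` is
natural on each `Σⁿ(A)`, the property of being the identity there.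
-/

namespace CategoryTheory

variable {C D : Type*} [Category C] [Category D]

def IsNaturalOn (Q : ObjectProperty C) (F : C ⥤ D) (α : ∀ X, F.obj X ≅ F.obj X) : Prop :=
  ∀ ⦃X Y : C⦄, Q X → Q Y → ∀ f : X ⟶ Y, (α X).hom ≫ F.map f = F.map f ≫ (α Y).hom

section Normalizer

variable {S : C ⥤ C} (P : ℤ → ObjectProperty C) (θ : ∀ X, S.obj X ≅ S.obj X)

open Classical in
/-- If `Y` is `S X` for some `X ∈ P j`, the upward step transports `θ_X ∘ S d_X` to `Y` along
a chosen such presentation; elsewhere the value is irrelevant. -/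
noncomputable def posNormalizer : ℕ → ∀ Y : C, Y ≅ Y
  | 0, Y => Iso.refl Y
  | j + 1, Y =>
    if h : ∃ X, P j X ∧ Nonempty (S.obj X ≅ Y) then
      h.choose_spec.2.some.symm ≪≫ θ _ ≪≫ S.mapIso (posNormalizer j _) ≪≫ h.choose_spec.2.some
    else Iso.refl Y

noncomputable def negNormalizer [S.Full] [S.Faithful] : ℕ → ∀ Y : C, Y ≅ Y
  | 0, Y => Iso.refl Y
  | j + 1, Y => S.preimageIso ((θ Y).symm ≪≫ negNormalizer j (S.obj Y))

noncomputable def normalizer [S.Full] [S.Faithful] : ℤ → ∀ Y : C, Y ≅ Y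
  | Int.ofNat j => posNormalizer P θ j
  | Int.negSucc j => negNormalizer θ (j + 1)

variable {P θ} [S.Full]

/-- With `f = 𝟙`, this says that the upward step does not depend on the chosen presentation. -/
lemma conj_comm_of_isNaturalOn {Q : ObjectProperty C} (hθ : IsNaturalOn Q S θ)
    {d : ∀ X, X ≅ X} (hd : IsNaturalOn Q (𝟭 C) d) {X X' Y Y' : C} (hX : Q X) (hX' : Q X')
    (e : S.obj X ≅ Y) (e' : S.obj X' ≅ Y') (f : Y ⟶ Y') :
    (e.symm ≪≫ θ X ≪≫ S.mapIso (d X) ≪≫ e).hom ≫ f =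
      f ≫ (e'.symm ≪≫ θ X' ≪≫ S.mapIso (d X') ≪≫ e').hom := by
  obtain ⟨g, hg⟩ : ∃ g : X ⟶ X', S.map g = e.hom ≫ f ≫ e'.inv := ⟨S.preimage _, S.map_preimage _⟩
  have hd' : (d X).hom ≫ g = g ≫ (d X').hom := hd hX hX' g
  have hθ' := hθ hX hX' g
  have hf : e.hom ≫ f = S.map g ≫ e'.hom := by simp [hg]
  simp only [Iso.trans_hom, Iso.symm_hom, Functor.mapIso_hom, Category.assoc]
  calc e.inv ≫ (θ X).hom ≫ S.map (d X).hom ≫ e.hom ≫ f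
      = e.inv ≫ (θ X).hom ≫ S.map ((d X).hom ≫ g) ≫ e'.hom := by simp [hf]
    _ = e.inv ≫ S.map g ≫ (θ X').hom ≫ S.map (d X').hom ≫ e'.hom := by
      rw [hd', S.map_comp, Category.assoc, reassoc_of% hθ']
    _ = f ≫ e'.inv ≫ (θ X').hom ≫ S.map (d X').hom ≫ e'.hom := by simp [hg]

lemma posNormalizer_isNaturalOn (hθ : ∀ n, IsNaturalOn (P n) S θ)
    (hSP : ∀ n Y, P (n + 1) Y → ∃ X, P n X ∧ Nonempty (S.obj X ≅ Y)) :
    ∀ j : ℕ, IsNaturalOn (P j) (𝟭 C) (posNormalizer P θ j)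
  | 0 => fun X Y _ _ f => by simp [posNormalizer]
  | j + 1 => fun Y Y' hY hY' f => by
    have h := hSP j Y hY
    have h' := hSP j Y' hY'
    simp only [posNormalizer, dif_pos h, dif_pos h', Functor.id_map]
    exact conj_comm_of_isNaturalOn (hθ j) (posNormalizer_isNaturalOn hθ hSP j)
      h.choose_spec.1 h'.choose_spec.1 _ _ f

lemma posNormalizer_succ_obj (hθ : ∀ n, IsNaturalOn (P n) S θ)
    (hSP : ∀ n Y, P (n + 1) Y → ∃ X, P n X ∧ Nonempty (S.obj X ≅ Y)) {j : ℕ} {X : C}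
    (hX : P j X) :
    posNormalizer P θ (j + 1) (S.obj X) = θ X ≪≫ S.mapIso (posNormalizer P θ j X) := by
  have h : ∃ X', P j X' ∧ Nonempty (S.obj X' ≅ S.obj X) := ⟨X, hX, ⟨Iso.refl _⟩⟩
  ext
  simpa [posNormalizer, dif_pos h] using conj_comm_of_isNaturalOn (hθ j)
    (posNormalizer_isNaturalOn hθ hSP j) h.choose_spec.1 hX _ (Iso.refl _) (𝟙 _)

variable [S.Faithful]

lemma negNormalizer_isNaturalOn (hθ : ∀ n, IsNaturalOn (P n) S θ)
    (hPS : ∀ n X, P n X → P (n + 1) (S.obj X)) :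
    ∀ j : ℕ, IsNaturalOn (P (-j)) (𝟭 C) (negNormalizer θ j)
  | 0 => fun X Y _ _ f => by simp [negNormalizer]
  | j + 1 => fun Y Y' hY hY' f => by
    have hSY : P (-j) (S.obj Y) := by simpa using hPS _ _ hY
    have hSY' : P (-j) (S.obj Y') := by simpa using hPS _ _ hY'
    have hθ' : (θ Y).inv ≫ S.map f = S.map f ≫ (θ Y').inv := by
      rw [Iso.inv_comp_eq, reassoc_of% (hθ _ hY hY' f), Iso.hom_inv_id, Category.comp_id]
    have ih : (negNormalizer θ j (S.obj Y)).hom ≫ S.map f =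
        S.map f ≫ (negNormalizer θ j (S.obj Y')).hom :=
      negNormalizer_isNaturalOn hθ hPS j hSY hSY' (S.map f)
    apply S.map_injective
    simp only [negNormalizer, Functor.id_map, Functor.map_comp, Functor.preimageIso_hom,
      Functor.map_preimage, Iso.trans_hom, Iso.symm_hom, Category.assoc, ih, reassoc_of% hθ']

lemma negNormalizer_succ_obj (j : ℕ) (X : C) :
    (negNormalizer θ j (S.obj X)).hom = (θ X).hom ≫ S.map (negNormalizer θ (j + 1) X).hom := by
  simp [negNormalizer]

lemma normalizer_natCast (j : ℕ) : normalizer P θ j = posNormalizer P θ j := rfl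

lemma normalizer_neg_natCast (j : ℕ) : normalizer P θ (-j) = negNormalizer θ j := by
  cases j <;> rfl

lemma normalizer_isNaturalOn (hθ : ∀ n, IsNaturalOn (P n) S θ)
    (hPS : ∀ n X, P n X → P (n + 1) (S.obj X))
    (hSP : ∀ n Y, P (n + 1) Y → ∃ X, P n X ∧ Nonempty (S.obj X ≅ Y)) (n : ℤ) :
    IsNaturalOn (P n) (𝟭 C) (normalizer P θ n) := by
  obtain ⟨j, rfl | rfl⟩ := Int.eq_nat_or_neg n
  · rw [normalizer_natCast]
    exact posNormalizer_isNaturalOn hθ hSP j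
  · rw [normalizer_neg_natCast]
    exact negNormalizer_isNaturalOn hθ hPS j

lemma normalizer_succ_obj (hθ : ∀ n, IsNaturalOn (P n) S θ)
    (hSP : ∀ n Y, P (n + 1) Y → ∃ X, P n X ∧ Nonempty (S.obj X ≅ Y)) {n : ℤ} {X : C}
    (hX : P n X) :
    (normalizer P θ (n + 1) (S.obj X)).hom =
      (θ X).hom ≫ S.map (normalizer P θ n X).hom := by
  rcases n with j | j
  · rw [Int.ofNat_eq_natCast, ← Nat.cast_add_one, normalizer_natCast, normalizer_natCast,
      posNormalizer_succ_obj hθ hSP hX]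
    rfl
  · rw [show Int.negSucc j + 1 = -(j : ℤ) by omega,
      show Int.negSucc j = -((j + 1 : ℕ) : ℤ) by omega, normalizer_neg_natCast,
      normalizer_neg_natCast]
    exact negNormalizer_succ_obj j X

theorem exists_isNaturalOn_trivializing (hθ : ∀ n, IsNaturalOn (P n) S θ)
    (hPS : ∀ n X, P n X → P (n + 1) (S.obj X))
    (hSP : ∀ n Y, P (n + 1) Y → ∃ X, P n X ∧ Nonempty (S.obj X ≅ Y))
    (hP : ∀ n m X, n ≠ m → P n X → P m X → IsZero X) :
    ∃ d : ∀ X, X ≅ X, (∀ n, IsNaturalOn (P n) (𝟭 C) d) ∧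
      ∀ n X, P n X → (d (S.obj X)).hom = (θ X).hom ≫ S.map (d X).hom := by
  classical
  let d X : X ≅ X := if h : ∃ n, P n X then normalizer P θ h.choose X else Iso.refl X
  have hd : ∀ n X, P n X → d X = normalizer P θ n X := by
    intro n X hX
    have h : ∃ n, P n X := ⟨n, hX⟩
    simp only [d, dif_pos h]
    -- an object lying in two different `P n` is zero
    by_cases hn : h.choose = n
    · rw [hn]
    · exact Iso.ext ((hP _ _ X hn h.choose_spec hX).eq_of_src _ _)
  refine ⟨d, fun n X Y hX hY f => ?_, fun n X hX => ?_⟩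
  · rw [hd n X hX, hd n Y hY]
    exact normalizer_isNaturalOn hθ hPS hSP n hX hY f
  · rw [hd (n + 1) _ (hPS n X hX), hd n X hX]
    exact normalizer_succ_obj hθ hSP hX

end Normalizer

section Conjugation

variable {S F : C ⥤ C} (hF : ∀ X, F.obj X = X)

def IsIdentityOn (Q : ObjectProperty C) : Prop :=
  ∀ ⦃X Y : C⦄, Q X → Q Y → ∀ f : X ⟶ Y, F.map f = eqToHom (hF X) ≫ f ≫ eqToHom (hF Y).symm

variable (ω : S ⋙ F ≅ F ⋙ S)

def shiftAut (X : C) : S.obj X ≅ S.obj X :=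
  eqToIso (hF _).symm ≪≫ ω.app X ≪≫ S.mapIso (eqToIso (hF X))

lemma shiftAut_isNaturalOn {Q Q' : ObjectProperty C} (hQQ' : ∀ X, Q X → Q' (S.obj X))
    (hQ : IsIdentityOn hF Q) (hQ' : IsIdentityOn hF Q') : IsNaturalOn Q S (shiftAut hF ω) := by
  intro X Y hX hY f
  have hω := ω.hom.naturality f
  simp only [Functor.comp_map, hQ hX hY f, hQ' (hQQ' X hX) (hQQ' Y hY) (S.map f)] at hω
  simpa [shiftAut] using
    congrArg (fun g => eqToHom (hF (S.obj X)).symm ≫ g ≫ S.map (eqToHom (hF Y))) hω.symm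

variable (d : ∀ X : C, X ≅ X)

abbrev conjFunctor : C ⥤ C where
  obj X := X
  map {X Y} f := (d X).inv ≫ eqToHom (hF X).symm ≫ F.map f ≫ eqToHom (hF Y) ≫ (d Y).hom

def conjIso : F ≅ conjFunctor hF d :=
  NatIso.ofComponents (fun X => eqToIso (hF X) ≪≫ d X) (fun f => by simp)

lemma conjIso_hom_app (X : C) : (conjIso hF d).hom.app X = eqToHom (hF X) ≫ (d X).hom := rfl

lemma conjIso_inv_app (X : C) : (conjIso hF d).inv.app X = (d X).inv ≫ eqToHom (hF X).symm := rfl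

def conjCommShift : S ⋙ conjFunctor hF d ≅ conjFunctor hF d ⋙ S :=
  Functor.isoWhiskerLeft S (conjIso hF d).symm ≪≫ ω ≪≫ Functor.isoWhiskerRight (conjIso hF d) S

lemma conjIso_hom_app_comp_conjCommShift (X : C) :
    (conjIso hF d).hom.app (S.obj X) ≫ (conjCommShift hF ω d).hom.app X =
      ω.hom.app X ≫ S.map ((conjIso hF d).hom.app X) := by
  simp [conjCommShift]

lemma conjCommShift_hom_app (X : C) :
    (conjCommShift hF ω d).hom.app X =
      (d (S.obj X)).inv ≫ (shiftAut hF ω X).hom ≫ S.map (d X).hom := by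
  simp [conjCommShift, conjIso_hom_app, conjIso_inv_app, shiftAut]

lemma conjCommShift_hom_app_eq_id {X : C}
    (hd : (d (S.obj X)).hom = (shiftAut hF ω X).hom ≫ S.map (d X).hom) :
    (conjCommShift hF ω d).hom.app X = 𝟙 _ := by
  rw [conjCommShift_hom_app, ← hd, Iso.inv_hom_id]
  rfl

lemma conjFunctor_isIdentityOn {Q : ObjectProperty C} (hQ : IsIdentityOn hF Q)
    (hd : IsNaturalOn Q (𝟭 C) d) : IsIdentityOn (F := conjFunctor hF d) (fun _ => rfl) Q := by
  intro X Y hX hY f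
  have hdf : (d X).hom ≫ f = f ≫ (d Y).hom := hd hX hY f
  show _ = 𝟙 X ≫ f ≫ 𝟙 Y
  simp [hQ hX hY f, ← hdf]

end Conjugation

end CategoryTheory

section BoundedHomotopyCategory

variable {V : Type*} [Category V] [Preadditive V]

local notation "KH" => HomotopyCategory V (ComplexShape.up ℤ)

lemma HomotopyCategory.shift_obj_as (X : KH) (n : ℤ) : (X⟦n⟧).as = X.as⟦n⟧ :=
  congrArg CategoryTheory.Quotient.as (CategoryTheory.Quotient.functor_obj_shift _ _ X.as n)

lemma InKb.shift {X : KH} (hX : InKb V X) (a : ℤ) : InKb V (X⟦a⟧) := by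
  obtain ⟨K, ⟨lo, hi, hK⟩, ⟨e⟩⟩ := hX
  exact ⟨K⟦a⟧, ⟨lo - a, hi - a, fun n hn => hK (n + a) (by omega)⟩,
    ⟨(shiftFunctor _ a).mapIso e ≪≫ (((HomotopyCategory.quotient V _).commShiftIso a).app K).symm⟩⟩

lemma IsStalkKb.isZero_of_ne {n m : ℤ} (hnm : n ≠ m) {X : Kb V} (hn : IsStalkKb V n X)
    (hm : IsStalkKb V m X) : IsZero X := by
  have hK : IsZero X.obj.as := by
    rw [IsZero.iff_id_eq_zero]
    ext i
    by_cases hi : i = -n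
    · exact (hm i (by omega)).eq_of_src _ _
    · exact (hn i hi).eq_of_src _ _
  exact IsZero.of_full_of_faithful_of_isZero (ObjectProperty.ι _) X
    ((HomotopyCategory.quotient V _).map_isZero hK)

instance : (SuspKb V).Full where
  map_surjective g :=
    ⟨ObjectProperty.homMk ((shiftFunctor KH (1 : ℤ)).preimage g.hom),
      InducedCategory.hom_ext ((shiftFunctor KH (1 : ℤ)).map_preimage g.hom)⟩

instance : (SuspKb V).Faithful where
  map_injective h := InducedCategory.hom_ext
    ((shiftFunctor KH (1 : ℤ)).map_injective (congrArg (·.hom) h))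

lemma IsStalkKb.susp {n : ℤ} {X : Kb V} (hX : IsStalkKb V n X) :
    IsStalkKb V (n + 1) ((SuspKb V).obj X) := by
  intro m hm
  rw [show ((SuspKb V).obj X).obj.as = X.obj.as⟦(1 : ℤ)⟧ from HomotopyCategory.shift_obj_as _ _]
  exact hX (m + 1) (by omega)

lemma IsStalkKb.exists_susp_iso {n : ℤ} {Y : Kb V} (hY : IsStalkKb V (n + 1) Y) :
    ∃ X, IsStalkKb V n X ∧ Nonempty ((SuspKb V).obj X ≅ Y) := by
  refine ⟨⟨Y.obj⟦(-1 : ℤ)⟧, Y.2.shift _⟩, fun m hm => ?_,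
    ⟨ObjectProperty.isoMk _ ((shiftFunctorCompIsoId KH (-1 : ℤ) 1 (by omega)).app Y.obj)⟩⟩
  rw [show (Y.obj⟦(-1 : ℤ)⟧).as = Y.obj.as⟦(-1 : ℤ)⟧ from HomotopyCategory.shift_obj_as _ _]
  exact hY (m - 1) (by omega)

variable [HasZeroObject V] [HasBinaryBiproducts V]

lemma exactKb_map_of_iso {F G : Kb V ⥤ Kb V} {ω : SuspKb V ⋙ F ≅ F ⋙ SuspKb V}
    {ω' : SuspKb V ⋙ G ≅ G ⋙ SuspKb V} (δ : F ≅ G)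
    (hδ : ∀ X, δ.hom.app ((SuspKb V).obj X) ≫ ω'.hom.app X =
      ω.hom.app X ≫ (SuspKb V).map (δ.hom.app X))
    {X Y Z : Kb V} {f : X ⟶ Y} {g : Y ⟶ Z} {h : Z ⟶ (SuspKb V).obj X}
    (hE : ExactKb V (F.map f) (F.map g) (F.map h ≫ ω.hom.app X)) :
    ExactKb V (G.map f) (G.map g) (G.map h ≫ ω'.hom.app X) := by
  have comm₃ : δ.hom.app Z ≫ G.map h ≫ ω'.hom.app X =
      (F.map h ≫ ω.hom.app X) ≫ (SuspKb V).map (δ.hom.app X) := by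
    rw [Category.assoc, ← hδ, δ.hom.naturality_assoc]
  refine isomorphic_distinguished _ hE _ (Triangle.isoMk _ _
    ((ObjectProperty.ι _).mapIso (δ.app X)) ((ObjectProperty.ι _).mapIso (δ.app Y))
    ((ObjectProperty.ι _).mapIso (δ.app Z)) ?_ ?_ ?_).symm
  · exact congrArg (·.hom) (δ.hom.naturality f)
  · exact congrArg (·.hom) (δ.hom.naturality g)
  · exact congrArg (·.hom) comm₃.symm

end BoundedHomotopyCategory

/--
Let A be a k-linear additive category and let (F, ω) be a pseudo-identity
on K^b(A). Then there exists a normalized pseudo-identity (F′, ω′) on K^b(A) together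
with an isomorphism of triangle functors δ: (F, ω) → (F′, ω′).
-/
theorem stmt_8 {k : Type*} [Field k]
    (A : Type*) [Category A] [Preadditive A] [Linear k A]
    [HasZeroObject A] [HasBinaryBiproducts A]
    (F : Kb A ⥤ Kb A) (ω : SuspKb A ⋙ F ≅ F ⋙ SuspKb A)
    (hF : IsPseudoIdentity k A F ω) :
    ∃ (F' : Kb A ⥤ Kb A) (ω' : SuspKb A ⋙ F' ≅ F' ⋙ SuspKb A),
      IsPseudoIdentity k A F' ω' ∧ IsNormalizedPseudoIdentity A F' ω' ∧
      ∃ δ : F ≅ F', ∀ X : Kb A,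
        δ.hom.app ((SuspKb A).obj X) ≫ ω'.hom.app X =
          ω.hom.app X ≫ (SuspKb A).map (δ.hom.app X) := by
  have := hF.additive
  have := hF.linear
  obtain ⟨d, hd_nat, hd_susp⟩ := exists_isNaturalOn_trivializing (P := IsStalkKb A)
    (θ := shiftAut hF.obj_eq ω)
    (fun n => shiftAut_isNaturalOn hF.obj_eq ω (fun _ => IsStalkKb.susp) (hF.map_stalk n)
      (hF.map_stalk (n + 1)))
    (fun _ _ => IsStalkKb.susp) (fun _ _ => IsStalkKb.exists_susp_iso)
    (fun _ _ _ hnm => IsStalkKb.isZero_of_ne hnm)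
  have hcompat := conjIso_hom_app_comp_conjCommShift hF.obj_eq ω d
  refine ⟨conjFunctor hF.obj_eq d, conjCommShift hF.obj_eq ω d,
    ⟨Functor.additive_of_iso (conjIso hF.obj_eq d), Functor.linear_of_iso _ (conjIso hF.obj_eq d),
      fun _ => rfl, fun n => conjFunctor_isIdentityOn hF.obj_eq d (hF.map_stalk n) (hd_nat n),
      fun _ _ _ _ _ _ hE => exactKb_map_of_iso _ hcompat (hF.exact _ _ _ _ _ _ hE)⟩,
    fun n X hX => ⟨rfl, conjCommShift_hom_app_eq_id hF.obj_eq ω d (hd_susp n X hX)⟩,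
    conjIso hF.obj_eq d, hcompat⟩
end
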